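/- arXiv:2403.12247 — 4 statements merged into one kernel-verified Lean document; each statement's English description precedes it below -/
import Mathlib

section
/- For m ∈ {1,2} and any γ ∈ [γ_g, 3] (where γ_g ∈ (5/2,3)), writing V_4 = −2λ/(γ+1+m(γ−1)) with λ = 1 + mγz, the point C_5 = −√(V_4(1+V_4)(λ+V_4)/((m+1)V_4+2mz)) satisfies C_5 > −2/3 for all z ∈ [z_g, z_M]. Equivalently, C_5² < 4/9. -/
/-- `λ = 1 + mγz`. -/
noncomputable def lam (m γ z : ℝ) : ℝ := 1 + m * γ * z

/-- `V_4 = −2λ/(γ+1+m(γ−1))`. -/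
noncomputable def V4 (m γ z : ℝ) : ℝ := -2 * lam m γ z / (γ + 1 + m * (γ - 1))

/-- `C_5 = −√(V_4(1+V_4)(λ+V_4)/((m+1)V_4+2mz))`. -/
noncomputable def C5 (m γ z : ℝ) : ℝ :=
  -Real.sqrt (V4 m γ z * (1 + V4 m γ z) * (lam m γ z + V4 m γ z) /
    ((m + 1) * V4 m γ z + 2 * m * z))

/-- `z_g(γ)` for `m = 1`. -/
noncomputable def zg1 (γ : ℝ) : ℝ :=
  (Real.sqrt (γ ^ 2 + (γ - 1) ^ 2) - γ) / (γ * (γ - 1))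

/-- `z_g(γ)` for `m = 2`. -/
noncomputable def zg2 (γ : ℝ) : ℝ :=
  (Real.sqrt ((2 * γ ^ 2 - γ + 1) ^ 2 + 2 * γ * (γ - 1) * (4 * γ * (γ - 1) + 8 / 3))
    - (2 * γ ^ 2 - γ + 1)) / (γ * (4 * γ * (γ - 1) + 8 / 3))

/-!
The radicand of `C_5` simplifies to
`λ² (m+1)(γ−1)((m+1)(γ−1) − 2mγz) / ((γ+1+m(γ−1))² (m+1+m(m−1)z))`.
Since `γ ≥ 2` forces `z_M ≤ 1/8`, on the whole range `γz ∈ [1/4, 3/8]`; for `m = 1, 2`, clearing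
denominators turns `C5Radicand < 4/9` into a polynomial inequality on this box.
-/

noncomputable def C5Radicand (m γ z : ℝ) : ℝ :=
  V4 m γ z * (1 + V4 m γ z) * (lam m γ z + V4 m γ z) / ((m + 1) * V4 m γ z + 2 * m * z)

theorem C5_eq_neg_sqrt_C5Radicand (m γ z : ℝ) : C5 m γ z = -Real.sqrt (C5Radicand m γ z) := rfl

theorem C5Radicand_eq (m γ z : ℝ) :
    C5Radicand m γ z = lam m γ z ^ 2 * (m + 1) * (γ - 1) * ((m + 1) * (γ - 1) - 2 * m * γ * z) /
      ((γ + 1 + m * (γ - 1)) ^ 2 * (m + 1 + m * (m - 1) * z)) := by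
  rcases eq_or_ne (γ + 1 + m * (γ - 1)) 0 with hD | hD
  · simp [C5Radicand, V4, hD]
  have hden : (m + 1) * V4 m γ z + 2 * m * z =
      -2 * (m + 1 + m * (m - 1) * z) / (γ + 1 + m * (γ - 1)) := by
    unfold V4 lam; field_simp; ring
  rw [C5Radicand, hden]
  rcases eq_or_ne (m + 1 + m * (m - 1) * z) 0 with hE | hE
  · simp [hE]
  unfold V4 lam
  field_simp
  ring

theorem one_div_sq_sqrt_two_add_sqrt_le {γ : ℝ} (hγ : 2 ≤ γ) :
    1 / (Real.sqrt 2 + Real.sqrt γ) ^ 2 ≤ 1 / 8 := by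
  have h2 : Real.sqrt 2 ≤ Real.sqrt γ := Real.sqrt_le_sqrt hγ
  have hsq : Real.sqrt 2 ^ 2 = 2 := Real.sq_sqrt (by norm_num)
  gcongr
  nlinarith [Real.sqrt_nonneg 2]

theorem mul_mem_Icc_quarter_three_eighths {γ z : ℝ} (hγ : 5 / 2 ≤ γ) (hγ3 : γ ≤ 3)
    (hz : 1 / 10 ≤ z) (hz8 : z ≤ 1 / 8) : γ * z ∈ Set.Icc (1 / 4 : ℝ) (3 / 8) :=
  ⟨by nlinarith, by nlinarith⟩

theorem C5Radicand_one_lt {γ z : ℝ} (hγ : 5 / 2 < γ) (hγ3 : γ ≤ 3) (hz : 1 / 10 ≤ z)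
    (hz8 : z ≤ 1 / 8) :
    C5Radicand 1 γ z < 4 / 9 := by
  obtain ⟨hw1, hw2⟩ := mul_mem_Icc_quarter_three_eighths hγ.le hγ3 hz hz8
  rw [C5Radicand_eq, div_lt_div_iff₀ (by nlinarith) (by norm_num)]
  unfold lam
  nlinarith [mul_nonneg (mul_nonneg (sub_pos.2 hγ).le (sub_nonneg.2 hγ3))
      (show (0 : ℝ) ≤ 9 * (1 + γ * z) ^ 2 - 8 by nlinarith),
    mul_nonneg (sub_nonneg.2 hw1) (sub_nonneg.2 hw2),
    mul_nonneg (mul_nonneg (sub_nonneg.2 hw1) (sub_nonneg.2 hw2)) (sub_nonneg.2 hw2)]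

theorem C5Radicand_two_lt {γ z : ℝ} (hγ : 5 / 2 < γ) (hγ3 : γ ≤ 3) (hz : 1 / 10 ≤ z)
    (hz8 : z ≤ 1 / 8) :
    C5Radicand 2 γ z < 4 / 9 := by
  obtain ⟨hw1, hw2⟩ := mul_mem_Icc_quarter_three_eighths hγ.le hγ3 hz hz8
  rw [C5Radicand_eq, div_lt_div_iff₀ (by nlinarith) (by norm_num)]
  unfold lam
  nlinarith [mul_nonneg (mul_nonneg (sub_pos.2 hγ).le (sub_nonneg.2 hγ3))
      (show (0 : ℝ) ≤ 27 * (1 + 2 * γ * z) ^ 2 - 36 by nlinarith),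
    mul_nonneg (sub_nonneg.2 hw1) (sub_nonneg.2 hw2),
    mul_nonneg (mul_nonneg (sub_nonneg.2 hw1) (sub_nonneg.2 hw2)) (sub_nonneg.2 hw2),
    mul_nonneg (sub_nonneg.2 hz) (sub_nonneg.2 hz8)]

theorem C5_gt_neg_two_thirds_general (m γ z zg : ℝ) (hm : m = 1 ∨ m = 2)
    (hγg : 5 / 2 < γ) (hγ3 : γ ≤ 3)
    (hzg10 : 1 / 10 ≤ zg)
    (hz1 : zg ≤ z) (hz2 : z ≤ 1 / (Real.sqrt 2 + Real.sqrt γ) ^ 2) :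
    -2 / 3 < C5 m γ z ∧ (C5 m γ z) ^ 2 < 4 / 9 := by
  have hz10 : 1 / 10 ≤ z := hzg10.trans hz1
  have hz8 : z ≤ 1 / 8 := hz2.trans (one_div_sq_sqrt_two_add_sqrt_le (by linarith))
  have hrad : C5Radicand m γ z < (2 / 3) ^ 2 := by
    rcases hm with rfl | rfl
    · linarith [C5Radicand_one_lt hγg hγ3 hz10 hz8]
    · linarith [C5Radicand_two_lt hγg hγ3 hz10 hz8]
  have hsqrt : Real.sqrt (C5Radicand m γ z) < 2 / 3 := (Real.sqrt_lt' (by norm_num)).2 hrad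
  rw [C5_eq_neg_sqrt_C5Radicand, neg_sq]
  constructor
  · linarith
  · nlinarith [Real.sqrt_nonneg (C5Radicand m γ z)]

/-- For `m ∈ {1,2}`, `γ ∈ [γ_g, 3]` (with `γ_g ∈ (5/2,3)`), and `z ∈ [z_g, z_M]`
(assuming `z_g ≥ 1/10` on this range), one has `C_5 > −2/3`, equivalently `C_5² < 4/9`. -/
theorem C5_gt_neg_two_thirds (m γ z zg : ℝ) (hm : m = 1 ∨ m = 2)
    (hγg : 5 / 2 < γ) (hγ3 : γ ≤ 3)
    (hzg_def : (m = 1 ∧ zg = zg1 γ) ∨ (m = 2 ∧ zg = zg2 γ))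
    (hzg10 : 1 / 10 ≤ zg)
    (hz1 : zg ≤ z) (hz2 : z ≤ 1 / (Real.sqrt 2 + Real.sqrt γ) ^ 2) :
    -2 / 3 < C5 m γ z ∧ (C5 m γ z) ^ 2 < 4 / 9 :=
  C5_gt_neg_two_thirds_general m γ z zg hm hγg hγ3 hzg10 hz1 hz2
end

section
/- Let m ∈ {1,2}. For every γ ∈ [γ_u, 3] (where γ_u ∈ (1,2) satisfies γ_u > 77/50), the quantity z_g(γ) satisfies z_g(γ) ≥ 1/10, where z_g(γ) = (√(γ²+(γ−1)²) − γ)/(γ(γ−1)) when m = 1, and z_g(γ) = (√((2γ²−γ+1)² + 2γ(γ−1)(4γ(γ−1)+8/3)) − (2γ²−γ+1))/(γ(4γ(γ−1)+8/3)) when m = 2. -/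
/-- For `m ∈ {1,2}` and every `γ ∈ [γ_u, 3]` (where `γ_u > 77/50`), one has
`z_g(γ) ≥ 1/10`, where `z_g` is given by the explicit formula for each `m`. -/
theorem zg_ge_one_tenth (γ : ℝ) (hγl : 77 / 50 ≤ γ) (hγu : γ ≤ 3) :
    1 / 10 ≤ (Real.sqrt (γ ^ 2 + (γ - 1) ^ 2) - γ) / (γ * (γ - 1)) ∧
    1 / 10 ≤ (Real.sqrt ((2 * γ ^ 2 - γ + 1) ^ 2
        + 2 * γ * (γ - 1) * (4 * γ * (γ - 1) + 8 / 3)) - (2 * γ ^ 2 - γ + 1)) /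
      (γ * (4 * γ * (γ - 1) + 8 / 3)) := by
  have hγ0 : (0:ℝ) < γ := by linarith
  have hγ1 : (0:ℝ) < γ - 1 := by linarith
  have hlo : (0:ℝ) ≤ γ - 77 / 50 := by linarith
  have hhi : (0:ℝ) ≤ 3 - γ := by linarith
  have hprod : (0:ℝ) ≤ (γ - 77 / 50) * (3 - γ) := mul_nonneg hlo hhi
  constructor
  · have hD : (0:ℝ) < γ * (γ - 1) := by positivity
    rw [le_div_iff₀ hD]
    have hsq : (γ + γ * (γ - 1) / 10) ^ 2 ≤ γ ^ 2 + (γ - 1) ^ 2 := by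
      nlinarith [sq_nonneg (γ - 1), sq_nonneg γ, mul_pos hγ0 hγ1]
    have key : γ + γ * (γ - 1) / 10 ≤ Real.sqrt (γ ^ 2 + (γ - 1) ^ 2) :=
      Real.le_sqrt_of_sq_le hsq
    linarith
  · have hE : (0:ℝ) < 4 * γ * (γ - 1) + 8 / 3 := by nlinarith
    have hD : (0:ℝ) < γ * (4 * γ * (γ - 1) + 8 / 3) := by positivity
    rw [le_div_iff₀ hD]
    have hsq : ((2 * γ ^ 2 - γ + 1) + γ * (4 * γ * (γ - 1) + 8 / 3) / 10) ^ 2 ≤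
        (2 * γ ^ 2 - γ + 1) ^ 2 + 2 * γ * (γ - 1) * (4 * γ * (γ - 1) + 8 / 3) := by
      nlinarith [sq_nonneg (γ - 3), sq_nonneg (γ - 77 / 50), mul_pos hγ0 hγ1,
        mul_nonneg hprod hγ0.le, mul_nonneg (mul_nonneg hprod hγ0.le) hγ0.le]
    have key : (2 * γ ^ 2 - γ + 1) + γ * (4 * γ * (γ - 1) + 8 / 3) / 10 ≤
        Real.sqrt ((2 * γ ^ 2 - γ + 1) ^ 2
          + 2 * γ * (γ - 1) * (4 * γ * (γ - 1) + 8 / 3)) :=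
      Real.le_sqrt_of_sq_le hsq
    linarith
end

section
/- For m = 1, the polynomial P(γ) = 25γ⁵ − 245γ⁴ − 546γ³ + 5016γ² − 15625γ + 15625 has exactly one real root in the interval (1,2], and this root lies in (79/50, 159/100). -/
/-!
The derivative `125γ⁴ − 980γ³ − 1638γ² + 10032γ − 15625` is negative on `[1, 2]`, so `P` is
strictly decreasing there and has at most one root in `(1, 2]`. Since `P(79/50) > 0 > P(159/100)`,
the intermediate value theorem puts a root in between, and monotonicity keeps every root of `P`
in `(1, 2]` strictly between these two points.
-/

open Set Polynomial

theorem StrictAntiOn.mem_Ioo_of_eq_zero {f : ℝ → ℝ} {s : Set ℝ} {c d : ℝ}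
    (hf : StrictAntiOn f s) (hc : c ∈ s) (hd : d ∈ s) (hfc : 0 < f c) (hfd : f d < 0)
    {x : ℝ} (hx : x ∈ s) (hfx : f x = 0) : x ∈ Ioo c d :=
  ⟨(hf.lt_iff_gt hx hc).1 (by rwa [hfx]), (hf.lt_iff_gt hd hx).1 (by rwa [hfx])⟩

theorem StrictAntiOn.existsUnique_eq_zero {f : ℝ → ℝ} {s : Set ℝ} {c d : ℝ}
    (hf : StrictAntiOn f s) (hcd : c ≤ d) (hs : Icc c d ⊆ s) (hcont : ContinuousOn f (Icc c d))
    (hfc : 0 < f c) (hfd : f d < 0) : ∃! x, x ∈ s ∧ f x = 0 := by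
  obtain ⟨x, hx, hfx⟩ := intermediate_value_Icc' hcd hcont ⟨hfd.le, hfc.le⟩
  exact ⟨x, ⟨hs hx, hfx⟩, fun y ⟨hy, hfy⟩ => hf.injOn hy (hs hx) (hfy.trans hfx.symm)⟩

noncomputable def quintic : ℝ[X] :=
  25 * X ^ 5 - 245 * X ^ 4 - 546 * X ^ 3 + 5016 * X ^ 2 - 15625 * X + 15625

theorem quintic_eval (x : ℝ) : quintic.eval x =
    25 * x ^ 5 - 245 * x ^ 4 - 546 * x ^ 3 + 5016 * x ^ 2 - 15625 * x + 15625 := by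
  simp [quintic]

theorem quintic_derivative_eval (x : ℝ) : quintic.derivative.eval x =
    125 * x ^ 4 - 980 * x ^ 3 - 1638 * x ^ 2 + 10032 * x - 15625 := by
  simp [quintic]
  ring

theorem quintic_derivative_eval_neg {x : ℝ} (h1 : 1 ≤ x) (h2 : x ≤ 2) :
    quintic.derivative.eval x < 0 := by
  have hx : 0 ≤ (x - 1) * (2 - x) := mul_nonneg (sub_nonneg.2 h1) (sub_nonneg.2 h2)
  rw [quintic_derivative_eval]
  nlinarith [mul_nonneg hx (sub_nonneg.2 h2)]

theorem strictAntiOn_quintic : StrictAntiOn quintic.eval (Icc 1 2) :=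
  strictAntiOn_of_deriv_neg (convex_Icc 1 2) quintic.continuousOn fun x hx => by
    rw [interior_Icc] at hx
    rw [Polynomial.deriv]
    exact quintic_derivative_eval_neg hx.1.le hx.2.le

/-- The polynomial `25γ⁵ − 245γ⁴ − 546γ³ + 5016γ² − 15625γ + 15625` has exactly one
real root in `(1,2]`, and this root lies in `(79/50, 159/100)`. -/
theorem quintic_unique_root :
    (∃! γ : ℝ, γ ∈ Set.Ioc (1 : ℝ) 2 ∧
      25 * γ ^ 5 - 245 * γ ^ 4 - 546 * γ ^ 3 + 5016 * γ ^ 2 - 15625 * γ + 15625 = 0) ∧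
    (∀ γ : ℝ, γ ∈ Set.Ioc (1 : ℝ) 2 →
      25 * γ ^ 5 - 245 * γ ^ 4 - 546 * γ ^ 3 + 5016 * γ ^ 2 - 15625 * γ + 15625 = 0 →
      79 / 50 < γ ∧ γ < 159 / 100) := by
  simp_rw [← quintic_eval]
  have hanti : StrictAntiOn quintic.eval (Ioc 1 2) :=
    strictAntiOn_quintic.mono Ioc_subset_Icc_self
  have hsub : Icc (79 / 50 : ℝ) (159 / 100) ⊆ Ioc 1 2 :=
    Icc_subset_Ioc (by norm_num) (by norm_num)
  have hpos : 0 < quintic.eval (79 / 50) := by norm_num [quintic_eval]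
  have hneg : quintic.eval (159 / 100) < 0 := by norm_num [quintic_eval]
  exact ⟨hanti.existsUnique_eq_zero (by norm_num) hsub quintic.continuousOn hpos hneg,
    fun γ hγ hroot => hanti.mem_Ioo_of_eq_zero (hsub (left_mem_Icc.2 (by norm_num)))
      (hsub (right_mem_Icc.2 (by norm_num))) hpos hneg hγ hroot⟩
end

section
/- The polynomial P(γ) = 450γ⁷ − 4860γ⁶ + 6432γ⁵ + 39111γ⁴ − 207817γ³ + 359749γ² − 275503γ + 110250 has exactly one real root in the interval (1,2], and this root lies in (77/50, 31/20). -/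
/-!
The septic is strictly decreasing on `[1, 2]`: after the substitution `x = 1 + t` its derivative
is a polynomial in `t ∈ [0, 1]` whose only positive coefficients, at `t³` and `t⁶`, are swamped by
the `t²` coefficient. It is positive at `77/50` and negative at `31/20`, so it has exactly one zero
in `(1, 2]`, and that zero lies strictly between these two points.
-/

open Set

section LevelSet

variable {α β : Type*} [ConditionallyCompleteLinearOrder α] [TopologicalSpace α] [OrderTopology α]
  [DenselyOrdered α] [LinearOrder β] [TopologicalSpace β] [OrderClosedTopology β]

theorem StrictAntiOn.existsUnique_eq_and_mem_Ioo {f : α → β} {s : Set α} [s.OrdConnected]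
    {a b : α} {c : β} (hf : StrictAntiOn f s) (hcont : ContinuousOn f (Icc a b))
    (ha : a ∈ s) (hb : b ∈ s) (hfa : c < f a) (hfb : f b < c) :
    (∃! x, x ∈ s ∧ f x = c) ∧ ∀ x ∈ s, f x = c → a < x ∧ x < b := by
  have hab : a ≤ b := ((hf.lt_iff_gt hb ha).1 (hfb.trans hfa)).le
  obtain ⟨x, hx, hfx⟩ := intermediate_value_Ioo' hab hcont ⟨hfb, hfa⟩
  have hxs : x ∈ s := Set.OrdConnected.out ‹_› ha hb (Ioo_subset_Icc_self hx)
  refine ⟨⟨x, ⟨hxs, hfx⟩, fun y ⟨hys, hfy⟩ => hf.injOn hys hxs (hfy.trans hfx.symm)⟩, ?_⟩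
  rintro y hys rfl
  exact ⟨(hf.lt_iff_gt hys ha).1 hfa, (hf.lt_iff_gt hb hys).1 hfb⟩

end LevelSet

noncomputable def septic (x : ℝ) : ℝ :=
  450 * x ^ 7 - 4860 * x ^ 6 + 6432 * x ^ 5 + 39111 * x ^ 4 - 207817 * x ^ 3
    + 359749 * x ^ 2 - 275503 * x + 110250

theorem hasDerivAt_septic (x : ℝ) :
    HasDerivAt septic (3150 * x ^ 6 - 29160 * x ^ 5 + 32160 * x ^ 4 + 156444 * x ^ 3
      - 623451 * x ^ 2 + 719498 * x - 275503) x := by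
  have h := ((((((((hasDerivAt_pow 7 x).const_mul 450).sub ((hasDerivAt_pow 6 x).const_mul 4860)).add
    ((hasDerivAt_pow 5 x).const_mul 6432)).add ((hasDerivAt_pow 4 x).const_mul 39111)).sub
    ((hasDerivAt_pow 3 x).const_mul 207817)).add ((hasDerivAt_pow 2 x).const_mul 359749)).sub
    ((hasDerivAt_id x).const_mul 275503)).add_const 110250
  exact h.congr_deriv (by push_cast; ring)

theorem septic_deriv_neg {x : ℝ} (h1 : 1 ≤ x) (h2 : x ≤ 2) :
    3150 * x ^ 6 - 29160 * x ^ 5 + 32160 * x ^ 4 + 156444 * x ^ 3 - 623451 * x ^ 2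
      + 719498 * x - 275503 < 0 := by
  obtain ⟨t, ht0, rfl⟩ : ∃ t, 0 ≤ t ∧ x = 1 + t := ⟨x - 1, by linarith, by ring⟩
  have ht1 : t ≤ 1 := by linarith
  have ht3 : t ^ 3 ≤ t ^ 2 := pow_le_pow_of_le_one ht0 ht1 (by norm_num)
  have ht6 : t ^ 6 ≤ t ^ 2 := pow_le_pow_of_le_one ht0 ht1 (by norm_num)
  -- the left side is `-16862 - 56332 t - 205509 t² + 56484 t³ - 66390 t⁴ - 10260 t⁵ + 3150 t⁶`
  nlinarith [pow_nonneg ht0 4, pow_nonneg ht0 5]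

theorem strictAntiOn_septic : StrictAntiOn septic (Icc 1 2) := by
  refine strictAntiOn_of_hasDerivWithinAt_neg (convex_Icc 1 2)
    (fun x _ => (hasDerivAt_septic x).continuousAt.continuousWithinAt)
    (fun x _ => (hasDerivAt_septic x).hasDerivWithinAt) fun x hx => ?_
  rw [interior_Icc] at hx
  exact septic_deriv_neg hx.1.le hx.2.le

theorem septic_pos : 0 < septic (77 / 50) := by norm_num [septic]

theorem septic_neg : septic (31 / 20) < 0 := by norm_num [septic]

/-- The polynomial `450γ⁷ − 4860γ⁶ + 6432γ⁵ + 39111γ⁴ − 207817γ³ + 359749γ² − 275503γ + 110250`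
has exactly one real root in `(1,2]`, and this root lies in `(77/50, 31/20)`. -/
theorem septic_unique_root :
    (∃! γ : ℝ, γ ∈ Set.Ioc (1 : ℝ) 2 ∧
      450 * γ ^ 7 - 4860 * γ ^ 6 + 6432 * γ ^ 5 + 39111 * γ ^ 4 - 207817 * γ ^ 3
        + 359749 * γ ^ 2 - 275503 * γ + 110250 = 0) ∧
    (∀ γ : ℝ, γ ∈ Set.Ioc (1 : ℝ) 2 →
      450 * γ ^ 7 - 4860 * γ ^ 6 + 6432 * γ ^ 5 + 39111 * γ ^ 4 - 207817 * γ ^ 3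
        + 359749 * γ ^ 2 - 275503 * γ + 110250 = 0 →
      77 / 50 < γ ∧ γ < 31 / 20) :=
  (strictAntiOn_septic.mono Ioc_subset_Icc_self).existsUnique_eq_and_mem_Ioo
    (fun x _ => (hasDerivAt_septic x).continuousAt.continuousWithinAt)
    (by norm_num) (by norm_num) septic_pos septic_neg
end
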